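/- arXiv:1901.08192 — 11 statements merged into one kernel-verified Lean document; each statement's English description precedes it below -/
import Mathlib

section
/- Let (X, ι, R, h, F) be a piecewise-homeomorphism system. Then the Fatou set X \ PD(F) is forward invariant: F(X \ PD(F)) ⊆ X \ PD(F), i.e., if z ∉ PD(F) then F(z) ∉ PD(F). -/
open Filter Topology

/-- Proposition 6.7 (first half): for a piecewise-homeomorphism system
`(X, ι, R, h, F)` the Fatou set `X \ PD(F)` is forward invariant, where
`PD(F) = closure (⋃ n, (F^[n]) ⁻¹' ∂R)` and `∂R = ⋃ m, frontier (R m)`. -/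
theorem fatou_forward_invariant {X : Type*} [TopologicalSpace X]
    {ι : Type*} [Finite ι]
    (R : ι → Set X) (h : ι → X ≃ₜ X) (F : X → X)
    (hdisj : Pairwise (Function.onFun Disjoint R))
    (hcover : ⋃ m, R m = Set.univ)
    (hF : ∀ m : ι, ∀ z ∈ R m, F z = h m z)
    (z : X)
    (hz : z ∉ closure (⋃ n : ℕ, (F^[n]) ⁻¹' (⋃ m : ι, frontier (R m)))) :
    F z ∉ closure (⋃ n : ℕ, (F^[n]) ⁻¹' (⋃ m : ι, frontier (R m))) := by
  set B : Set X := ⋃ m : ι, frontier (R m) with hB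
  set S : Set X := ⋃ n : ℕ, (F^[n]) ⁻¹' B with hS
  -- z has an open neighborhood U disjoint from S
  obtain ⟨U, hUS, hUopen, hzU⟩ : ∃ U, U ⊆ Sᶜ ∧ IsOpen U ∧ z ∈ U := by
    have : Sᶜ ∈ 𝓝 z := by
      rw [← mem_interior_iff_mem_nhds, interior_compl]
      exact hz
    exact mem_nhds_iff.mp this
  -- z belongs to some piece R m
  obtain ⟨m, hzm⟩ : ∃ m, z ∈ R m := by
    have := hcover ▸ Set.mem_univ z
    simpa using this
  -- z ∉ B (take n = 0 in S)
  have hzB : z ∉ B := fun hzBmem => hUS hzU (Set.mem_iUnion.mpr ⟨0, by simpa using hzBmem⟩)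
  -- hence z ∈ interior (R m)
  have hzint : z ∈ interior (R m) := by
    have hfr : z ∉ frontier (R m) := fun hfr => hzB (Set.mem_iUnion.mpr ⟨m, hfr⟩)
    have : z ∈ closure (R m) := subset_closure hzm
    rw [frontier, Set.mem_diff] at hfr
    tauto
  -- the image neighborhood of F z
  set V : Set X := h m '' (U ∩ interior (R m)) with hV
  have hVopen : IsOpen V := (h m).isOpenMap _ (hUopen.inter isOpen_interior)
  have hFzV : F z ∈ V := by
    rw [hF m z hzm]
    exact ⟨z, ⟨hzU, hzint⟩, rfl⟩
  -- V is disjoint from S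
  have hVS : V ∩ S = ∅ := by
    ext y
    simp only [Set.mem_inter_iff, Set.mem_empty_iff_false, iff_false]
    rintro ⟨⟨x, ⟨hxU, hxint⟩, rfl⟩, hyS⟩
    obtain ⟨n, hn⟩ := Set.mem_iUnion.mp hyS
    have hFx : F x = h m x := hF m x (interior_subset hxint)
    have : x ∈ S := by
      refine Set.mem_iUnion.mpr ⟨n + 1, ?_⟩
      have heq : F^[n + 1] x = F^[n] (h m x) := by
        rw [Function.iterate_succ_apply, hFx]
      exact Set.mem_preimage.mpr (heq ▸ hn)
    exact hUS hxU this
  -- conclude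
  intro hc
  obtain ⟨y, hyV, hyS⟩ := mem_closure_iff.mp hc V hVopen hFzV
  have : y ∈ V ∩ S := ⟨hyV, hyS⟩
  rw [hVS] at this
  exact this
end

section
/- Let (X, ι, R, h, F) be a piecewise-homeomorphism system. Then the pre-discontinuity set is backward invariant: F⁻¹(PD(F)) ⊆ PD(F). -/
open Filter Topology

/-- Proposition 6.7 (second half): for a piecewise-homeomorphism system
`(X, ι, R, h, F)` the pre-discontinuity set
`PD(F) = closure (⋃ n, (F^[n]) ⁻¹' ∂R)`, with `∂R = ⋃ m, frontier (R m)`,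
is backward invariant: `F ⁻¹' PD(F) ⊆ PD(F)`. -/
theorem preDiscontinuity_backward_invariant {X : Type*} [TopologicalSpace X]
    {ι : Type*} [Finite ι]
    (R : ι → Set X) (h : ι → X ≃ₜ X) (F : X → X)
    (hdisj : Pairwise (Function.onFun Disjoint R))
    (hcover : ⋃ m, R m = Set.univ)
    (hF : ∀ m : ι, ∀ z ∈ R m, F z = h m z) :
    F ⁻¹' (closure (⋃ n : ℕ, (F^[n]) ⁻¹' (⋃ m : ι, frontier (R m)))) ⊆
      closure (⋃ n : ℕ, (F^[n]) ⁻¹' (⋃ m : ι, frontier (R m))) := by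
  set D := ⋃ m : ι, frontier (R m) with hD
  set S := ⋃ n : ℕ, (F^[n]) ⁻¹' D with hS
  intro x hx
  by_contra hxS
  have hxD : x ∉ D := fun hd =>
    hxS (subset_closure (Set.mem_iUnion.2 ⟨0, by simpa using hd⟩))
  obtain ⟨m, hm⟩ : ∃ m, x ∈ R m := by
    have : x ∈ ⋃ m, R m := hcover ▸ Set.mem_univ x
    exact Set.mem_iUnion.1 this
  have hint : x ∈ interior (R m) := by
    by_contra hni
    exact hxD (Set.mem_iUnion.2 ⟨m, ⟨subset_closure hm, hni⟩⟩)
  set V := interior (R m) ∩ (closure S)ᶜ with hV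
  have hVopen : IsOpen V := isOpen_interior.inter isClosed_closure.isOpen_compl
  have hxV : x ∈ V := ⟨hint, hxS⟩
  have hFV : IsOpen ((h m) '' V) := (h m).isOpenMap _ hVopen
  have hFx : F x ∈ (h m) '' V := by rw [hF m x hm]; exact ⟨x, hxV, rfl⟩
  rw [Set.mem_preimage, mem_closure_iff] at hx
  obtain ⟨y, hy, hyS⟩ := hx _ hFV hFx
  obtain ⟨v, hvV, rfl⟩ := hy
  obtain ⟨n, hn⟩ := Set.mem_iUnion.1 hyS
  have hFv : F v = h m v := hF m v (interior_subset hvV.1)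
  have hvS : v ∈ S := Set.mem_iUnion.2 ⟨n + 1, by
    simp only [Set.mem_preimage] at hn ⊢
    rw [Function.iterate_succ_apply, hFv]; exact hn⟩
  exact hvV.2 (subset_closure hvS)
end

section
/- Let F : ℂ → ℂ be defined by F(z) = 2z if |z| < 1 and F(z) = (2/3)z if |z| ≥ 1. Then F has no periodic points other than 0: for every z ∈ ℂ with z ≠ 0 and every n ≥ 1, the n-th iterate satisfies F^[n](z) ≠ z. -/
/-! Each application of `F` multiplies the norm by `2` or by `2/3`, so `F^[n] z = z` with `z ≠ 0`
would give `2^i (2/3)^j = 1` with `i + j = n ≥ 1`, i.e. `2^n = 3^j`, which parity rules out. -/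

open Complex

theorem Function.exists_iterate_eq_pow_mul_pow {α M : Type*} [CommMonoid M] {f : α → α}
    {g : α → M} {a b : M} (hf : ∀ x, g (f x) = a * g x ∨ g (f x) = b * g x) (x : α) (m : ℕ) :
    ∃ i j : ℕ, i + j = m ∧ g (f^[m] x) = a ^ i * b ^ j * g x := by
  induction m with
  | zero => exact ⟨0, 0, rfl, by simp⟩
  | succ m ih =>
    obtain ⟨i, j, hij, hm⟩ := ih
    rw [Function.iterate_succ_apply']
    rcases hf (f^[m] x) with ha | hb
    · exact ⟨i + 1, j, by omega, by rw [ha, hm, pow_succ]; ac_rfl⟩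
    · exact ⟨i, j + 1, by omega, by rw [hb, hm, pow_succ]; ac_rfl⟩

theorem Nat.two_pow_ne_three_pow {k : ℕ} (hk : k ≠ 0) (j : ℕ) : 2 ^ k ≠ 3 ^ j := by
  intro h
  have h2 : Even (2 ^ k) := (Nat.even_pow' hk).mpr even_two
  rw [h, Nat.even_pow] at h2
  exact absurd h2.1 (by decide)

theorem two_pow_mul_two_thirds_pow_ne_one {i j : ℕ} (hij : i + j ≠ 0) :
    (2 : ℝ) ^ i * (2 / 3) ^ j ≠ 1 := by
  intro h
  have h3 : (2 : ℝ) ^ (i + j) = 3 ^ j := by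
    rw [div_pow, ← mul_div_assoc, div_eq_one_iff_eq (by positivity)] at h
    rw [pow_add, ← h, mul_comm]
  exact Nat.two_pow_ne_three_pow hij j (by exact_mod_cast h3)

/-- Section 2.6: the piecewise conformal map `F(z) = 2z` for `|z| < 1`,
`F(z) = (2/3)z` for `|z| ≥ 1` has no periodic points other than `0`. -/
theorem no_periodic_points
    (F : ℂ → ℂ)
    (hF : ∀ z : ℂ, F z = if ‖z‖ < 1 then 2 * z else (2 / 3) * z)
    (z : ℂ) (hz : z ≠ 0) (n : ℕ) (hn : 1 ≤ n) :
    F^[n] z ≠ z := by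
  have hnorm (w : ℂ) : ‖F w‖ = 2 * ‖w‖ ∨ ‖F w‖ = 2 / 3 * ‖w‖ := by
    rw [hF]
    split_ifs
    · left; simp
    · right; rw [norm_mul, norm_div]; norm_num
  intro hper
  obtain ⟨i, j, hij, hiter⟩ := Function.exists_iterate_eq_pow_mul_pow hnorm z n
  rw [hper] at hiter
  have hz' : ‖z‖ ≠ 0 := norm_ne_zero_iff.mpr hz
  exact two_pow_mul_two_thirds_pow_ne_one (by omega : i + j ≠ 0)
    (mul_right_cancel₀ hz' (by rw [one_mul]; exact hiter.symm))
end

section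
/- The set of real numbers of the form 3^m / 2^n with m, n ∈ ℕ and m ≤ n is dense in the nonnegative reals: for every real x ≥ 0 and every ε > 0 there exist natural numbers m ≤ n with |3^m / 2^n − x| < ε. -/
private lemma pq_ne (p q : ℕ) (hp : 0 < p) :
    (p : ℝ) * (Real.log 3 - Real.log 2) ≠ (q : ℝ) * Real.log 2 := by
  intro h
  have h3 : (p : ℝ) * Real.log 3 = ((q + p : ℕ) : ℝ) * Real.log 2 := by
    push_cast; linarith
  have hlog : Real.log ((3 : ℝ) ^ p) = Real.log ((2 : ℝ) ^ (q + p)) := by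
    rw [Real.log_pow, Real.log_pow]; exact_mod_cast h3
  have h3p : (0:ℝ) < 3 ^ p := by positivity
  have h2p : (0:ℝ) < 2 ^ (q + p) := by positivity
  have heq : (3 : ℝ) ^ p = (2 : ℝ) ^ (q + p) := by
    have := congrArg Real.exp hlog
    rwa [Real.exp_log h3p, Real.exp_log h2p] at this
  have heqn : (3 : ℕ) ^ p = 2 ^ (q + p) := by exact_mod_cast heq
  have h2 : (2 : ℕ) ∣ 3 ^ p := heqn ▸ dvd_pow_self 2 (by omega)
  have := (Nat.Prime.dvd_of_dvd_pow Nat.prime_two h2)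
  omega

private lemma small_elt (δ : ℝ) (hδ : 0 < δ) :
    ∃ p q : ℕ, 0 < p ∧
      (p : ℝ) * (Real.log 3 - Real.log 2) - (q : ℝ) * Real.log 2 ≠ 0 ∧
      |(p : ℝ) * (Real.log 3 - Real.log 2) - (q : ℝ) * Real.log 2| < δ := by
  set a : ℝ := Real.log 3 - Real.log 2 with ha
  set b : ℝ := Real.log 2 with hb
  have hb0 : 0 < b := Real.log_pos (by norm_num)
  have ha0 : 0 < a := sub_pos.mpr (Real.log_lt_log (by norm_num) (by norm_num))
  set k : ℕ → ℤ := fun n => ⌊(n : ℝ) * a / b⌋ with hk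
  set s : ℕ → ℝ := fun n => (n : ℝ) * a - (k n : ℝ) * b with hs
  have hs_nonneg : ∀ n, 0 ≤ s n := by
    intro n
    have h1 := Int.floor_le ((n : ℝ) * a / b)
    have h2 : (k n : ℝ) * b ≤ (n : ℝ) * a := by
      calc (k n : ℝ) * b ≤ ((n : ℝ) * a / b) * b :=
            mul_le_mul_of_nonneg_right h1 (le_of_lt hb0)
        _ = (n : ℝ) * a := by field_simp
    simpa [hs] using sub_nonneg.mpr h2
  have hs_lt : ∀ n, s n < b := by
    intro n
    have h1 : (n : ℝ) * a / b < (k n : ℝ) + 1 := Int.lt_floor_add_one _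
    have h2 : (n : ℝ) * a < ((k n : ℝ) + 1) * b := by
      have := mul_lt_mul_of_pos_right h1 hb0
      rwa [div_mul_cancel₀ _ (ne_of_gt hb0)] at this
    simp only [hs]
    nlinarith
  set J : ℕ := ⌈b / δ⌉₊ with hJ
  have hJb : b ≤ (J : ℝ) * δ := by
    have := Nat.le_ceil (b / δ)
    calc b = (b / δ) * δ := by field_simp
      _ ≤ (J : ℝ) * δ := mul_le_mul_of_nonneg_right this (le_of_lt hδ)
  set g : ℕ → ℕ := fun n => ⌊s n / δ⌋₊ with hg
  have hgmem : ∀ n ∈ Finset.range (J + 1), g n ∈ Finset.range J := by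
    intro n _
    simp only [Finset.mem_range, hg]
    rw [Nat.floor_lt (div_nonneg (hs_nonneg n) hδ.le), div_lt_iff₀ hδ]
    exact lt_of_lt_of_le (hs_lt n) hJb
  obtain ⟨n, -, m, -, hnm, hgnm⟩ :=
    Finset.exists_ne_map_eq_of_card_lt_of_maps_to
      (by simp : (Finset.range J).card < (Finset.range (J + 1)).card) hgmem
  have hclose : ∀ i j : ℕ, g i = g j → |s i - s j| < δ := by
    intro i j hij
    have h1 : (g i : ℝ) * δ ≤ s i :=
      calc ((g i : ℝ)) * δ ≤ (s i / δ) * δ :=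
            mul_le_mul_of_nonneg_right (Nat.floor_le (div_nonneg (hs_nonneg i) hδ.le)) hδ.le
        _ = s i := by field_simp
    have h2 : s i < ((g i : ℝ) + 1) * δ := by
      have h := mul_lt_mul_of_pos_right (Nat.lt_floor_add_one (s i / δ)) hδ
      rw [div_mul_cancel₀ _ (ne_of_gt hδ)] at h
      simpa [hg] using h
    have h3 : (g j : ℝ) * δ ≤ s j :=
      calc ((g j : ℝ)) * δ ≤ (s j / δ) * δ :=
            mul_le_mul_of_nonneg_right (Nat.floor_le (div_nonneg (hs_nonneg j) hδ.le)) hδ.le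
        _ = s j := by field_simp
    have h4 : s j < ((g j : ℝ) + 1) * δ := by
      have h := mul_lt_mul_of_pos_right (Nat.lt_floor_add_one (s j / δ)) hδ
      rw [div_mul_cancel₀ _ (ne_of_gt hδ)] at h
      simpa [hg] using h
    rw [hij] at h1 h2
    rw [abs_sub_lt_iff]
    constructor <;> linarith
  have key : ∀ i j : ℕ, i < j → g i = g j →
      ∃ p q : ℕ, 0 < p ∧ (p:ℝ) * a - (q:ℝ) * b ≠ 0 ∧ |(p:ℝ) * a - (q:ℝ) * b| < δ := by
    intro i j hij hgij
    have hkmono : k i ≤ k j := by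
      apply Int.floor_le_floor
      have : (i:ℝ) * a ≤ (j:ℝ) * a :=
        mul_le_mul_of_nonneg_right (by exact_mod_cast hij.le) ha0.le
      exact div_le_div_of_nonneg_right this hb0.le
    refine ⟨j - i, (k j - k i).toNat, by omega, ?_, ?_⟩
    · have hrepr : ((j - i : ℕ) : ℝ) * a - (((k j - k i).toNat : ℤ) : ℝ) * b = s j - s i := by
        rw [Int.toNat_of_nonneg (by omega), Nat.cast_sub hij.le]
        simp only [hs]
        push_cast
        ring
      intro hzero
      have h' : ((j - i : ℕ) : ℝ) * a = (((k j - k i).toNat : ℕ) : ℝ) * b := by linarith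
      rw [ha, hb] at h'
      exact pq_ne (j - i) (k j - k i).toNat (by omega) h'
    · have hrepr : ((j - i : ℕ) : ℝ) * a - (((k j - k i).toNat : ℤ) : ℝ) * b = s j - s i := by
        rw [Int.toNat_of_nonneg (by omega), Nat.cast_sub hij.le]
        simp only [hs]
        push_cast
        ring
      push_cast at hrepr
      rw [hrepr]
      rw [abs_sub_comm]
      exact hclose i j hgij
  rcases lt_or_gt_of_ne hnm with hlt | hlt
  · exact key n m hlt hgnm
  · exact key m n hlt hgnm.symm

private lemma dense_lattice (t δ : ℝ) (hδ : 0 < δ) :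
    ∃ m k : ℕ, |(m : ℝ) * (Real.log 3 - Real.log 2) - (k : ℝ) * Real.log 2 - t| < δ := by
  set a : ℝ := Real.log 3 - Real.log 2 with ha
  set b : ℝ := Real.log 2 with hb
  have hb0 : 0 < b := Real.log_pos (by norm_num)
  have ha0 : 0 < a := sub_pos.mpr (Real.log_lt_log (by norm_num) (by norm_num))
  obtain ⟨p, q, hp, hd0, hdδ⟩ := small_elt δ hδ
  set d : ℝ := (p:ℝ) * a - (q:ℝ) * b with hd
  rcases lt_or_gt_of_ne hd0 with hneg | hpos
  · -- d < 0 : descend from M*a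
    obtain ⟨M, hM⟩ := exists_nat_ge (t / a)
    have hMa : t ≤ (M : ℝ) * a := by
      rw [← div_le_iff₀ ha0] at *; linarith [hM]
    set e : ℝ := -d with he
    have he0 : 0 < e := by simp [he]; linarith
    set N : ℕ := ⌊((M : ℝ) * a - t) / e⌋₊ with hN
    have h1 : (N : ℝ) * e ≤ (M : ℝ) * a - t := by
      calc (N : ℝ) * e ≤ (((M : ℝ) * a - t) / e) * e :=
            mul_le_mul_of_nonneg_right (Nat.floor_le (div_nonneg (by linarith) he0.le)) he0.le
        _ = (M : ℝ) * a - t := by field_simp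
    have h2 : (M : ℝ) * a - t < ((N : ℝ) + 1) * e := by
      have h := mul_lt_mul_of_pos_right (Nat.lt_floor_add_one (((M : ℝ) * a - t) / e)) he0
      rwa [div_mul_cancel₀ _ (ne_of_gt he0)] at h
    refine ⟨M + N * p, N * q, ?_⟩
    have hval : ((M + N * p : ℕ) : ℝ) * a - ((N * q : ℕ) : ℝ) * b = (M : ℝ) * a + (N : ℝ) * d := by
      push_cast; rw [hd]; ring
    rw [hval]
    have hde : d = -e := by rw [he]; ring
    rw [abs_lt]
    constructor <;> [nlinarith [abs_lt.mp hdδ]; nlinarith [abs_lt.mp hdδ]]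
  · -- d > 0 : ascend from -K*b
    obtain ⟨K, hK⟩ := exists_nat_ge (-t / b)
    have hKb : -t ≤ (K : ℝ) * b := by
      rw [← div_le_iff₀ hb0] at *; linarith [hK]
    set r : ℝ := t + (K : ℝ) * b with hr
    have hr0 : 0 ≤ r := by rw [hr]; linarith
    set N : ℕ := ⌊r / d⌋₊ with hN
    have h1 : (N : ℝ) * d ≤ r := by
      calc (N : ℝ) * d ≤ (r / d) * d :=
            mul_le_mul_of_nonneg_right (Nat.floor_le (div_nonneg hr0 hpos.le)) hpos.le
        _ = r := by field_simp
    have h2 : r < ((N : ℝ) + 1) * d := by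
      have h := mul_lt_mul_of_pos_right (Nat.lt_floor_add_one (r / d)) hpos
      rwa [div_mul_cancel₀ _ (ne_of_gt hpos)] at h
    refine ⟨N * p, N * q + K, ?_⟩
    have hval : ((N * p : ℕ) : ℝ) * a - ((N * q + K : ℕ) : ℝ) * b = (N : ℝ) * d - (K : ℝ) * b := by
      push_cast; rw [hd]; ring
    rw [hval, abs_lt]
    constructor <;> [nlinarith [abs_lt.mp hdδ]; nlinarith [abs_lt.mp hdδ]]

/-- Section 2.6: the numbers `3^m / 2^n` with `m ≤ n` are dense in `[0, ∞)`. -/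
theorem dense_pow_ratios (x : ℝ) (hx : 0 ≤ x) (ε : ℝ) (hε : 0 < ε) :
    ∃ m n : ℕ, m ≤ n ∧ |(3 : ℝ) ^ m / 2 ^ n - x| < ε := by
  rcases eq_or_lt_of_le hx with hx0 | hx0
  · -- x = 0
    obtain ⟨n, hn⟩ := pow_unbounded_of_one_lt (1 / ε) (by norm_num : (1:ℝ) < 2)
    refine ⟨0, n, Nat.zero_le n, ?_⟩
    have h2n : (0:ℝ) < 2 ^ n := by positivity
    rw [← hx0, sub_zero, pow_zero, abs_of_pos (by positivity)]
    rw [div_lt_iff₀ h2n]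
    rw [div_lt_iff₀ hε] at hn
    nlinarith
  · -- x > 0
    set δ : ℝ := Real.log (1 + ε / x) with hδdef
    have hδ : 0 < δ := Real.log_pos (by rw [lt_add_iff_pos_right]; positivity)
    obtain ⟨m, k, hmk⟩ := dense_lattice (Real.log x) δ hδ
    refine ⟨m, m + k, Nat.le_add_right m k, ?_⟩
    set y : ℝ := (3:ℝ) ^ m / 2 ^ (m + k) with hy
    have hy0 : 0 < y := by positivity
    have hylog : Real.log y = (m : ℝ) * (Real.log 3 - Real.log 2) - (k : ℝ) * Real.log 2 := by
      rw [hy, Real.log_div (by positivity) (by positivity), Real.log_pow, Real.log_pow]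
      push_cast; ring
    rw [← hylog] at hmk
    have hup : y < x + ε := by
      have h1 : Real.log y < Real.log x + δ := by
        have := abs_lt.mp hmk; linarith
      have h2 : Real.log x + δ = Real.log (x + ε) := by
        rw [hδdef, ← Real.log_mul (ne_of_gt hx0) (by positivity)]
        congr 1; field_simp
      rw [h2] at h1
      have := Real.exp_lt_exp.mpr h1
      rwa [Real.exp_log hy0, Real.exp_log (by linarith)] at this
    have hdown : x - ε < y := by
      have h1 : Real.log x - δ < Real.log y := by
        have := abs_lt.mp hmk; linarith
      have h2 : Real.log x - δ = Real.log (x * x / (x + ε)) := by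
        rw [hδdef, Real.log_div (by positivity) (by positivity), Real.log_mul (ne_of_gt hx0) (ne_of_gt hx0)]
        have : Real.log (x + ε) = Real.log x + Real.log (1 + ε / x) := by
          rw [← Real.log_mul (ne_of_gt hx0) (by positivity)]
          congr 1; field_simp
        linarith
      rw [h2] at h1
      have h3 := Real.exp_lt_exp.mpr h1
      rw [Real.exp_log hy0, Real.exp_log (by positivity)] at h3
      have h4 : x - ε < x * x / (x + ε) := by
        rw [lt_div_iff₀ (by linarith)]
        nlinarith
      linarith
    rw [abs_sub_lt_iff]
    constructor <;> linarith
end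

section
/- Let h : ℝ → ℝ be defined by h(x) = 2x if x < 1 and h(x) = (2/3)x if x ≥ 1. Then h maps the interval [2/3, 2) into itself, and for every x ∈ [2/3, 2) the forward orbit {h^[n](x) : n ∈ ℕ} is dense in [2/3, 2), i.e., the interval [2/3, 2) is contained in the closure of the orbit. -/
/-!
In the coordinate `log₃ x mod 1` on the circle `ℝ/ℤ`, the interval `[2/3, 2)` is a fundamental
domain (its image `[log₃ 2 - 1, log₃ 2)` has length one), and both branches of `h` become
translation by `log₃ 2`, since `log₃ (2x) = log₃ x + log₃ 2` and
`log₃ (2x/3) = log₃ x + log₃ 2 - 1`. So `h` on `[2/3, 2)` is conjugate to the rotation by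
`log₃ 2`, which is irrational since no positive power of 2 is a power of 3. Forward orbits of an
irrational rotation are dense, and the conjugacy is a homeomorphism away from the cut point,
which gives density on `(2/3, 2)` and hence on its closure.
-/

open Real Set

theorem irrational_logb_of_coprime {a b : ℕ} (ha : 1 < a) (hb : 1 < b) (hab : a.Coprime b) :
    Irrational (logb b a) := by
  rintro ⟨q, hq⟩
  have hq_pos : 0 < q := by
    have : 0 < logb b a := logb_pos (by exact_mod_cast hb) (by exact_mod_cast ha)
    exact_mod_cast hq ▸ this
  obtain ⟨k, hk⟩ := Int.eq_ofNat_of_zero_le (Rat.num_pos.2 hq_pos).le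
  have hpow : b ^ k = a ^ q.den := by
    have hb₀ : (0 : ℝ) < b := by positivity
    have : ((b : ℝ) ^ (q : ℝ)) ^ (q.den : ℝ) = (a : ℝ) ^ q.den := by
      rw [hq, rpow_logb hb₀ (by exact_mod_cast hb.ne') (by positivity), rpow_natCast]
    rw [← rpow_mul hb₀.le, Rat.cast_def, div_mul_cancel₀ _ (by positivity), hk] at this
    exact_mod_cast this
  have : a ^ q.den = 1 := (hab.pow q.den k).eq_one_of_dvd (by rw [hpow])
  exact ha.ne' ((Nat.pow_eq_one.1 this).resolve_right q.den_nz)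

theorem irrational_logb_three_two : Irrational (logb 3 2) := by
  simpa using irrational_logb_of_coprime (a := 2) (b := 3) (by norm_num) (by norm_num) (by norm_num)

theorem AddCircle.denseRange_add_nsmul_coe {α : ℝ} (hα : Irrational α) (t : AddCircle (1 : ℝ)) :
    DenseRange fun n : ℕ ↦ t + n • (α : AddCircle (1 : ℝ)) := by
  have : DenseRange fun n : ℕ ↦ n • (α : AddCircle (1 : ℝ)) := by
    rw [← denseRange_zsmul_iff_nsmul, AddCircle.denseRange_zsmul_coe_iff, div_one]
    exact hα
  exact (Homeomorph.addLeft t).surjective.denseRange.comp this (Homeomorph.addLeft t).continuous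

noncomputable def logCircle (x : ℝ) : AddCircle (1 : ℝ) := (logb 3 x : ℝ)

theorem logCircle_rpow (s : ℝ) : logCircle (3 ^ s) = s := by
  rw [logCircle, logb_rpow (by norm_num) (by norm_num)]

theorem injOn_logCircle : InjOn logCircle (Ico (2 / 3) 2) := by
  have hmem : ∀ x ∈ Ico (2 / 3 : ℝ) 2,
      logb 3 x ∈ Ico (logb 3 (2 / 3)) (logb 3 (2 / 3) + 1) := by
    rintro x ⟨hx₁, hx₂⟩
    have : logb 3 (2 / 3) + 1 = logb 3 2 := by
      rw [logb_div (by norm_num) (by norm_num), logb_self_eq_one (by norm_num), sub_add_cancel]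
    rw [this]
    exact ⟨logb_le_logb_of_le (by norm_num) (by norm_num) hx₁,
      logb_lt_logb (by norm_num) (by linarith) hx₂⟩
  intro x hx y hy hxy
  exact logb_injOn_pos (by norm_num) (by linarith [hx.1] : 0 < x) (by linarith [hy.1] : 0 < y)
    ((AddCircle.coe_eq_coe_iff_of_mem_Ico (hmem x hx) (hmem y hy)).1 hxy)

section

variable {h : ℝ → ℝ}

theorem mapsTo_Ico_of_eq_ite (hh : ∀ x, h x = if x < 1 then 2 * x else 2 / 3 * x) :
    MapsTo h (Ico (2 / 3) 2) (Ico (2 / 3) 2) := by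
  rintro x ⟨hx₁, hx₂⟩
  rw [hh]
  split_ifs <;> constructor <;> linarith

theorem logCircle_apply_of_eq_ite (hh : ∀ x, h x = if x < 1 then 2 * x else 2 / 3 * x)
    {x : ℝ} (hx : 0 < x) : logCircle (h x) = logCircle x + (logb 3 2 : ℝ) := by
  rw [hh]
  split_ifs
  · rw [logCircle, logCircle, logb_mul (by norm_num) hx.ne', AddCircle.coe_add, add_comm]
  · rw [logCircle, logCircle, logb_mul (by norm_num) hx.ne', logb_div (by norm_num) (by norm_num),
      logb_self_eq_one (by norm_num), sub_add_eq_add_sub, AddCircle.coe_sub, AddCircle.coe_period,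
      sub_zero, AddCircle.coe_add, add_comm]

theorem logCircle_iterate_of_eq_ite (hh : ∀ x, h x = if x < 1 then 2 * x else 2 / 3 * x)
    {x : ℝ} (hx : x ∈ Ico (2 / 3) 2) (n : ℕ) :
    logCircle (h^[n] x) = logCircle x + n • (logb 3 2 : AddCircle (1 : ℝ)) := by
  induction n with
  | zero => simp
  | succ n ih =>
    have hpos : 0 < h^[n] x := by linarith [((mapsTo_Ico_of_eq_ite hh).iterate n hx).1]
    rw [Function.iterate_succ_apply', logCircle_apply_of_eq_ite hh hpos, ih, succ_nsmul,
      add_assoc]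

theorem Ioo_subset_closure_orbit_of_eq_ite (hh : ∀ x, h x = if x < 1 then 2 * x else 2 / 3 * x)
    {x : ℝ} (hx : x ∈ Ico (2 / 3) 2) :
    Ioo (2 / 3) 2 ⊆ closure {y : ℝ | ∃ n : ℕ, h^[n] x = y} := by
  refine fun y hy ↦ _root_.mem_closure_iff.2 fun U hU hyU ↦ ?_
  set W := (fun s : ℝ ↦ (3 : ℝ) ^ s) ⁻¹' (U ∩ Ioo (2 / 3) 2)
  have hW : IsOpen W := (hU.inter isOpen_Ioo).preimage (continuous_const_rpow (by norm_num))
  have hyW : logb 3 y ∈ W := by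
    rw [mem_preimage, rpow_logb (by norm_num) (by norm_num) (by linarith [hy.1])]
    exact ⟨hyU, hy⟩
  obtain ⟨n, w, hwW, hw⟩ : ∃ n : ℕ, ∃ w ∈ W,
      (w : AddCircle (1 : ℝ)) = logCircle x + n • (logb 3 2 : AddCircle (1 : ℝ)) :=
    (AddCircle.denseRange_add_nsmul_coe irrational_logb_three_two _).exists_mem_open
      (QuotientAddGroup.isOpenMap_coe W hW) ⟨_, _, hyW, rfl⟩
  have hw_orbit : (3 : ℝ) ^ w = h^[n] x :=
    injOn_logCircle (Ioo_subset_Ico_self hwW.2) ((mapsTo_Ico_of_eq_ite hh).iterate n hx)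
      (by rw [logCircle_rpow, logCircle_iterate_of_eq_ite hh hx, hw])
  exact ⟨h^[n] x, hw_orbit ▸ hwW.1, n, rfl⟩

end

/-- Section 2.6: the map `h(x) = 2x` for `x < 1`, `h(x) = (2/3)x` for `x ≥ 1`
maps the interval `[2/3, 2)` into itself, and every forward orbit of a point of
`[2/3, 2)` is dense in `[2/3, 2)`. -/
theorem orbit_dense_in_Ico
    (h : ℝ → ℝ)
    (hh : ∀ x : ℝ, h x = if x < 1 then 2 * x else (2 / 3) * x) :
    Set.MapsTo h (Set.Ico (2 / 3 : ℝ) 2) (Set.Ico (2 / 3 : ℝ) 2) ∧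
    ∀ x ∈ Set.Ico (2 / 3 : ℝ) 2,
      Set.Ico (2 / 3 : ℝ) 2 ⊆ closure {y : ℝ | ∃ n : ℕ, h^[n] x = y} := by
  refine ⟨mapsTo_Ico_of_eq_ite hh, fun x hx ↦ ?_⟩
  calc Ico (2 / 3 : ℝ) 2 ⊆ closure (Ioo (2 / 3) 2) := by
        rw [closure_Ioo (by norm_num)]
        exact Ico_subset_Icc_self
    _ ⊆ closure {y : ℝ | ∃ n : ℕ, h^[n] x = y} :=
        closure_minimal (Ioo_subset_closure_orbit_of_eq_ite hh hx) isClosed_closure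
end

section
/- Let F : ℂ → ℂ be defined by F(z) = 2z if |z| < 1 and F(z) = (2/3)z if |z| ≥ 1. Then the union over all n ≥ 0 of the preimages (F^[n])⁻¹({z : |z| = 1}) of the unit circle under the iterates of F is dense in ℂ. (Equivalently, the pre-discontinuity set of F is the whole Riemann sphere.) -/
open Complex

open Filter Set Topology

/-! `‖F z‖` depends only on `‖z‖`, and the orbit of every radius `(3/2)^q / 2^p` reaches `1`:
below `1` the radius is doubled, which strips a factor `1/2`, and above `1` it is multiplied
by `2/3`, which strips a factor `3/2`. These radii are the exponentials of
`q log(3/2) - p log 2`, and such numbers are dense in `ℝ` since `log(3/2) / log 2` is irrational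
(`3^d ≠ 2^(k+d)`): by compactness of `ℝ/(log 2)ℤ`, the multiples `q log(3/2)` with `q`
arbitrarily large come arbitrarily close to every class. -/

theorem irrational_log_three_halves_div_log_two :
    Irrational (Real.log (3 / 2) / Real.log 2) := by
  rintro ⟨q, hq⟩
  have hq_pos : 0 < q := by
    have : (0 : ℝ) < q := hq ▸ div_pos (Real.log_pos (by norm_num)) (Real.log_pos (by norm_num))
    exact_mod_cast this
  obtain ⟨k, hk⟩ : ∃ k : ℕ, (k : ℤ) = q.num :=
    ⟨_, Int.toNat_of_nonneg (Rat.num_pos.2 hq_pos).le⟩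
  have hlog : Real.log ((3 / 2) ^ q.den) = Real.log (2 ^ k) := by
    rw [Rat.cast_def, ← hk, Int.cast_natCast,
      div_eq_div_iff (by positivity) (Real.log_pos (by norm_num)).ne'] at hq
    rw [Real.log_pow, Real.log_pow]
    linarith
  have hreal : (3 / 2 : ℝ) ^ q.den = 2 ^ k :=
    Real.log_injOn_pos (mem_Ioi.2 (by positivity)) (mem_Ioi.2 (by positivity)) hlog
  have hnat : 3 ^ q.den = 2 ^ (k + q.den) := by
    rw [div_pow, div_eq_iff (by positivity), ← pow_add] at hreal
    exact_mod_cast hreal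
  have := congrArg (· % 2) hnat
  simp [Nat.pow_mod, q.den_pos.ne'] at this

theorem denseRange_nat_mul_sub_nat_mul {a b : ℝ} (ha : 0 < a) (hb : 0 < b)
    (hab : Irrational (a / b)) : DenseRange fun qp : ℕ × ℕ => (qp.1 : ℝ) * a - qp.2 * b := by
  have : Fact (0 < b) := ⟨hb⟩
  rw [Metric.denseRange_iff]
  intro t ε hε
  have hdense : DenseRange fun n : ℕ => n • (a : AddCircle b) :=
    denseRange_zsmul_iff_nsmul.1 (AddCircle.denseRange_zsmul_coe_iff.2 hab)
  have hclus : MapClusterPt (t : AddCircle b) atTop fun n : ℕ => n • (a : AddCircle b) :=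
    ((mapClusterPt_atTop_nsmul_tfae _ _).out 0 2).2 (hdense.closure_eq ▸ mem_univ _)
  have hU : ((↑) : ℝ → AddCircle b) '' Ioo (t - ε) (t + ε) ∈ 𝓝 (t : AddCircle b) :=
    (QuotientAddGroup.isOpenMap_coe _ isOpen_Ioo).mem_nhds ⟨t, ⟨by linarith, by linarith⟩, rfl⟩
  -- with `q ≥ N` the point `q a` lies above `s`, so `s` lifts as `q a - p b` with `p ≥ 0`
  obtain ⟨N, hN⟩ := exists_nat_gt ((t + ε) / a)
  obtain ⟨q, hNq, s, hs, hsq⟩ := (hclus.frequently hU).forall_exists_of_atTop N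
  rw [← AddCircle.coe_nsmul, QuotientAddGroup.eq_iff_sub_mem, AddSubgroup.mem_zmultiples_iff] at hsq
  obtain ⟨m, hm⟩ := hsq
  rw [zsmul_eq_mul, nsmul_eq_mul] at hm
  have hm_neg : m < 0 := by
    have hqa : t + ε < q * a := by
      rw [div_lt_iff₀ ha] at hN
      nlinarith [(Nat.cast_le (α := ℝ)).2 hNq]
    have : (m : ℝ) * b < 0 := by rw [hm]; linarith [hs.2]
    exact_mod_cast neg_of_mul_neg_left this hb.le
  refine ⟨(q, (-m).toNat), ?_⟩
  have hcast : (((-m).toNat : ℕ) : ℝ) = -m := by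
    exact_mod_cast Int.toNat_of_nonneg (by omega)
  have hs' : (q : ℝ) * a - ((-m).toNat : ℕ) * b = s := by
    rw [hcast]; linarith
  rw [hs', Real.dist_eq, abs_sub_lt_iff]
  constructor <;> linarith [hs.1, hs.2]

section

variable {F : ℂ → ℂ}

theorem norm_apply_of_norm_lt_one
    (hF : ∀ z : ℂ, F z = if ‖z‖ < 1 then 2 * z else (2 / 3) * z) {z : ℂ} (hz : ‖z‖ < 1) :
    ‖F z‖ = 2 * ‖z‖ := by
  simp [hF, hz]

theorem norm_apply_of_one_le_norm
    (hF : ∀ z : ℂ, F z = if ‖z‖ < 1 then 2 * z else (2 / 3) * z) {z : ℂ} (hz : 1 ≤ ‖z‖) :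
    ‖F z‖ = 2 / 3 * ‖z‖ := by
  simp [hF, hz.not_gt]

theorem exists_iterate_norm_eq_one
    (hF : ∀ z : ℂ, F z = if ‖z‖ < 1 then 2 * z else (2 / 3) * z) :
    ∀ (q p : ℕ) (z : ℂ), ‖z‖ = (3 / 2) ^ q / 2 ^ p → ∃ n, ‖F^[n] z‖ = 1
  | q, p, z, hz => by
    rcases lt_trichotomy ‖z‖ 1 with hlt | heq | hgt
    · obtain ⟨p, rfl⟩ : ∃ p', p = p' + 1 := by
        refine Nat.exists_eq_add_one.2 (Nat.pos_of_ne_zero fun hp => ?_)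
        rw [hz, hp, pow_zero, div_one] at hlt
        exact (one_le_pow₀ (by norm_num : (1 : ℝ) ≤ 3 / 2)).not_gt hlt
      obtain ⟨n, hn⟩ := exists_iterate_norm_eq_one hF q p (F z) (by
        rw [norm_apply_of_norm_lt_one hF hlt, hz, pow_succ]; field_simp)
      exact ⟨n + 1, hn⟩
    · exact ⟨0, heq⟩
    · obtain ⟨q, rfl⟩ : ∃ q', q = q' + 1 := by
        refine Nat.exists_eq_add_one.2 (Nat.pos_of_ne_zero fun hq => ?_)
        rw [hz, hq, pow_zero] at hgt
        exact (div_le_one_of_le₀ (one_le_pow₀ (by norm_num : (1 : ℝ) ≤ 2)) (by positivity)).not_gt hgt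
      obtain ⟨n, hn⟩ := exists_iterate_norm_eq_one hF q p (F z) (by
        rw [norm_apply_of_one_le_norm hF hgt.le, hz, pow_succ]; field_simp)
      exact ⟨n + 1, hn⟩
termination_by q p => q + p

end

/-- Section 2.6: for the piecewise conformal map `F(z) = 2z` for `|z| < 1`,
`F(z) = (2/3)z` for `|z| ≥ 1`, the union of the preimages of the unit circle
under all iterates of `F` is dense in `ℂ`; equivalently, the
pre-discontinuity set of `F` is the whole Riemann sphere. -/
theorem preDiscontinuity_eq_whole_sphere
    (F : ℂ → ℂ)
    (hF : ∀ z : ℂ, F z = if ‖z‖ < 1 then 2 * z else (2 / 3) * z) :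
    Dense (⋃ n : ℕ, (F^[n]) ⁻¹' {z : ℂ | ‖z‖ = 1}) := by
  have hradii := denseRange_nat_mul_sub_nat_mul (Real.log_pos (by norm_num : (1 : ℝ) < 3 / 2))
    (Real.log_pos one_lt_two) irrational_log_three_halves_div_log_two
  have hexp : DenseRange exp := by
    rw [DenseRange, range_exp]
    exact dense_compl_singleton 0
  refine (hexp.dense_image continuous_exp (hradii.preimage isOpenMap_re)).mono ?_
  rintro _ ⟨w, ⟨⟨q, p⟩, hqp⟩, rfl⟩
  obtain ⟨n, hn⟩ := exists_iterate_norm_eq_one hF q p (exp w) (by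
    rw [norm_exp, ← hqp, Real.exp_sub, Real.exp_nat_mul, Real.exp_nat_mul,
      Real.exp_log (by norm_num), Real.exp_log (by norm_num)])
  exact mem_iUnion.2 ⟨n, hn⟩
end

section
/- Let T : ℂ → ℂ be defined by T(z) = iz if Im z < 0 and T(z) = −iz + 1 + i if Im z ≥ 0. Then for every n ∈ ℕ and all real numbers a, b with 0 < a < 1 and n < b < n + 1, the (2n+3)-rd iterate satisfies T^[2n+3](a + bi) = (b − n) + (n + 2 − a)i; in particular T^[2n+3](a + bi) lies in the open square (0,1) × (n+1, n+2). -/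
open Complex

lemma Tstep2 (T : ℂ → ℂ)
    (hT : ∀ z : ℂ, T z = if z.im < 0 then I * z else -I * z + 1 + I)
    (x y : ℝ) (hy : 0 ≤ y) (hx : 1 < x) :
    T^[2] ((x : ℂ) + (y : ℂ) * I) = ((x - 1 : ℝ) : ℂ) + ((y + 1 : ℝ) : ℂ) * I := by
  have h1 : T ((x : ℂ) + (y : ℂ) * I) = ((y + 1 : ℝ) : ℂ) + ((1 - x : ℝ) : ℂ) * I := by
    rw [hT, if_neg (by simp [not_lt, hy])]
    apply Complex.ext <;> simp <;> ring
  have h2 : T (((y + 1 : ℝ) : ℂ) + ((1 - x : ℝ) : ℂ) * I)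
      = ((x - 1 : ℝ) : ℂ) + ((y + 1 : ℝ) : ℂ) * I := by
    rw [hT, if_pos (by simp; linarith)]
    apply Complex.ext <;> simp <;> ring
  simp only [show (2:ℕ)=1+1 from rfl, Function.iterate_add_apply, Function.iterate_one, h1, h2]

lemma Tstep3 (T : ℂ → ℂ)
    (hT : ∀ z : ℂ, T z = if z.im < 0 then I * z else -I * z + 1 + I)
    (a b : ℝ) (ha0 : 0 < a) (ha1 : a < 1) (hb : 0 < b) :
    T^[3] ((a : ℂ) + (b : ℂ) * I) = ((b : ℝ) : ℂ) + ((2 - a : ℝ) : ℂ) * I := by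
  have h1 : T ((a : ℂ) + (b : ℂ) * I) = ((b + 1 : ℝ) : ℂ) + ((1 - a : ℝ) : ℂ) * I := by
    rw [hT, if_neg (by simp; linarith)]
    apply Complex.ext <;> simp <;> ring
  have h2 : T (((b + 1 : ℝ) : ℂ) + ((1 - a : ℝ) : ℂ) * I)
      = ((2 - a : ℝ) : ℂ) + ((-b : ℝ) : ℂ) * I := by
    rw [hT, if_neg (by simp; linarith)]
    apply Complex.ext <;> simp <;> ring
  have h3 : T (((2 - a : ℝ) : ℂ) + ((-b : ℝ) : ℂ) * I)
      = ((b : ℝ) : ℂ) + ((2 - a : ℝ) : ℂ) * I := by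
    rw [hT, if_pos (by simp; linarith)]
    apply Complex.ext <;> simp <;> ring
  simp only [show (3:ℕ)=1+1+1 from rfl, Function.iterate_add_apply, Function.iterate_one, h1, h2, h3]

/-- Section 2.5 (second wandering-domain example): for
`T(z) = iz` if `Im z < 0`, `T(z) = -iz + 1 + i` otherwise, and a point
`a + bi` with `0 < a < 1` and `n < b < n + 1`, the `(2n+3)`-rd iterate is
`(b - n) + (n + 2 - a)i`, which lies in the open square `(0,1) × (n+1, n+2)`. -/
theorem iterate_of_square_point
    (T : ℂ → ℂ)
    (hT : ∀ z : ℂ, T z = if z.im < 0 then I * z else -I * z + 1 + I)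
    (n : ℕ) (a b : ℝ)
    (ha0 : 0 < a) (ha1 : a < 1) (hbn : (n : ℝ) < b) (hbn1 : b < (n : ℝ) + 1) :
    T^[2 * n + 3] ((a : ℂ) + (b : ℂ) * I) =
        ((b - n : ℝ) : ℂ) + ((n + 2 - a : ℝ) : ℂ) * I ∧
      0 < (T^[2 * n + 3] ((a : ℂ) + (b : ℂ) * I)).re ∧
      (T^[2 * n + 3] ((a : ℂ) + (b : ℂ) * I)).re < 1 ∧
      (n : ℝ) + 1 < (T^[2 * n + 3] ((a : ℂ) + (b : ℂ) * I)).im ∧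
      (T^[2 * n + 3] ((a : ℂ) + (b : ℂ) * I)).im < (n : ℝ) + 2 := by
  have hb0 : 0 < b := lt_of_le_of_lt (Nat.cast_nonneg n) hbn
  have key : ∀ k : ℕ, k ≤ n →
      T^[2 * k + 3] ((a : ℂ) + (b : ℂ) * I)
        = ((b - k : ℝ) : ℂ) + ((k + 2 - a : ℝ) : ℂ) * I := by
    intro k hk
    induction k with
    | zero => simpa using Tstep3 T hT a b ha0 ha1 hb0
    | succ m ih =>
        have hm : m ≤ n := Nat.le_of_succ_le hk
        have hmn : (m : ℝ) + 1 ≤ (n : ℝ) := by exact_mod_cast hk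
        have h1 : (2 * (m + 1) + 3) = 2 + (2 * m + 3) := by ring
        rw [h1, Function.iterate_add_apply, ih hm,
          Tstep2 T hT (b - m) (m + 2 - a) (by linarith) (by linarith)]
        push_cast
        ring
  have hkey := key n le_rfl
  refine ⟨hkey, ?_, ?_, ?_, ?_⟩ <;> rw [hkey] <;> simp <;> linarith
end

section
/- Let T : ℂ → ℂ be defined by T(z) = iz if Im z < 0 and T(z) = −iz + 1 + i if Im z ≥ 0. Then the pre-discontinuity set of T equals the integer grid: closure(⋃_{n≥0} (T^[n])⁻¹({z : Im z = 0})) = {z ∈ ℂ : Re z ∈ ℤ or Im z ∈ ℤ}. -/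
open Complex

noncomputable def mval (k : ℤ) (t : ℝ) : ℤ :=
  if 0 ≤ t then (if 1 ≤ k then k - 1 else 2 - k + 2 * ⌈t⌉)
  else (if 1 ≤ k then k + 2 * ⌈-t⌉ - 1 else if k = 0 then 0 else -k)

lemma T_re_neg {T : ℂ → ℂ} (hT : ∀ z : ℂ, T z = if z.im < 0 then I * z else -I * z + 1 + I)
    (z : ℂ) (h : z.im < 0) : (T z).re = -z.im := by
  rw [hT z, if_pos h]; simp [Complex.mul_re]

lemma T_im_neg {T : ℂ → ℂ} (hT : ∀ z : ℂ, T z = if z.im < 0 then I * z else -I * z + 1 + I)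
    (z : ℂ) (h : z.im < 0) : (T z).im = z.re := by
  rw [hT z, if_pos h]; simp [Complex.mul_im]

lemma T_re_pos {T : ℂ → ℂ} (hT : ∀ z : ℂ, T z = if z.im < 0 then I * z else -I * z + 1 + I)
    (z : ℂ) (h : ¬ z.im < 0) : (T z).re = z.im + 1 := by
  rw [hT z, if_neg h]; simp [Complex.add_re, Complex.mul_re]

lemma T_im_pos {T : ℂ → ℂ} (hT : ∀ z : ℂ, T z = if z.im < 0 then I * z else -I * z + 1 + I)
    (z : ℂ) (h : ¬ z.im < 0) : (T z).im = 1 - z.re := by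
  rw [hT z, if_neg h]; simp [Complex.add_im, Complex.mul_im]; ring

lemma step {T : ℂ → ℂ} (hT : ∀ z : ℂ, T z = if z.im < 0 then I * z else -I * z + 1 + I)
    (z : ℂ) (k : ℤ) (hk : z.re = (k : ℝ)) :
    (∃ n, (T^[n] z).im = 0) ∨
    (∃ k' : ℤ, (T (T z)).re = (k' : ℝ) ∧ mval k' (T (T z)).im ≤ mval k z.im - 1
      ∧ 1 ≤ mval k z.im) := by
  by_cases h1 : z.im < 0
  · have e1re := T_re_neg hT z h1
    have e1im := T_im_neg hT z h1
    rcases lt_trichotomy k 0 with hk0 | hk0 | hk0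
    · -- k < 0 : next state V(-k, -z.im)
      have h2 : (T z).im < 0 := by rw [e1im, hk]; exact_mod_cast hk0
      have e2re := T_re_neg hT (T z) h2
      have e2im := T_im_neg hT (T z) h2
      right
      refine ⟨-k, by rw [e2re, e1im, hk]; push_cast; ring, ?_, ?_⟩
      · have him : (T (T z)).im = -z.im := by rw [e2im, e1re]
        have h1' : (0:ℝ) ≤ -z.im := by linarith
        have h2' : (1:ℤ) ≤ -k := by omega
        simp only [mval, him, if_pos h1', if_pos h2', if_neg h1.not_ge,
          if_neg (by omega : ¬ (1:ℤ) ≤ k), if_neg (by omega : ¬ k = 0)]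
        omega
      · simp only [mval, if_neg h1.not_ge, if_neg (by omega : ¬ (1:ℤ) ≤ k),
          if_neg (by omega : ¬ k = 0)]
        omega
    · -- k = 0 : done in one step
      left; exact ⟨1, by rw [Function.iterate_one, e1im, hk, hk0]; norm_num⟩
    · -- k > 0 : next state V(k+1, 1+z.im)
      have h2 : ¬ (T z).im < 0 := by
        rw [e1im, hk]
        have : (0:ℝ) ≤ (k:ℝ) := by exact_mod_cast hk0.le
        linarith
      have e2re := T_re_pos hT (T z) h2
      have e2im := T_im_pos hT (T z) h2
      right
      have hceil : (1:ℤ) ≤ ⌈-z.im⌉ := Int.ceil_pos.2 (by linarith)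
      have hmcond : mval k z.im = k + 2 * ⌈-z.im⌉ - 1 := by
        simp only [mval, if_neg h1.not_ge, if_pos (by omega : (1:ℤ) ≤ k)]
      refine ⟨k + 1, by rw [e2re, e1im, hk]; push_cast; ring, ?_, by omega⟩
      rw [hmcond]
      have him : (T (T z)).im = 1 + z.im := by rw [e2im, e1re]; ring
      by_cases h3 : (0:ℝ) ≤ 1 + z.im
      · simp only [mval, him, if_pos h3, if_pos (by omega : (1:ℤ) ≤ k + 1)]
        omega
      · have hc2 : ⌈-(1 + z.im)⌉ = ⌈-z.im⌉ - 1 := by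
          rw [show -(1 + z.im) = -z.im - 1 by ring, Int.ceil_sub_one]
        simp only [mval, him, if_neg h3, if_pos (by omega : (1:ℤ) ≤ k + 1), hc2]
        omega
  · have e1re := T_re_pos hT z h1
    have e1im := T_im_pos hT z h1
    have h0t : (0:ℝ) ≤ z.im := le_of_not_gt h1
    rcases lt_trichotomy k 1 with hk0 | hk0 | hk0
    · -- k ≤ 0 : next state V(2-k, -z.im)
      have h2 : ¬ (T z).im < 0 := by
        rw [e1im, hk]
        have : (k:ℝ) ≤ 0 := by exact_mod_cast (by omega : k ≤ 0)
        linarith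
      have e2re := T_re_pos hT (T z) h2
      have e2im := T_im_pos hT (T z) h2
      right
      have hceil : (0:ℤ) ≤ ⌈z.im⌉ := Int.ceil_nonneg h0t
      have hmcond : mval k z.im = 2 - k + 2 * ⌈z.im⌉ := by
        simp only [mval, if_pos h0t, if_neg (by omega : ¬ (1:ℤ) ≤ k)]
      refine ⟨2 - k, by rw [e2re, e1im, hk]; push_cast; ring, ?_, by omega⟩
      rw [hmcond]
      have him : (T (T z)).im = -z.im := by rw [e2im, e1re]; ring
      by_cases h3 : (0:ℝ) ≤ -z.im
      · simp only [mval, him, if_pos h3, if_pos (by omega : (1:ℤ) ≤ 2 - k)]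
        omega
      · have hc2 : ⌈-(-z.im)⌉ = ⌈z.im⌉ := by rw [neg_neg]
        simp only [mval, him, if_neg h3, if_pos (by omega : (1:ℤ) ≤ 2 - k), hc2]
        omega
    · -- k = 1 : done in one step
      left
      exact ⟨1, by rw [Function.iterate_one, e1im, hk, hk0]; norm_num⟩
    · -- k ≥ 2 : next state V(k-1, z.im+1)
      have h2 : (T z).im < 0 := by
        rw [e1im, hk]
        have : (2:ℝ) ≤ (k:ℝ) := by exact_mod_cast (by omega : (2:ℤ) ≤ k)
        linarith
      have e2re := T_re_neg hT (T z) h2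
      have e2im := T_im_neg hT (T z) h2
      right
      refine ⟨k - 1, by rw [e2re, e1im, hk]; push_cast; ring, ?_, ?_⟩
      · have him : (T (T z)).im = z.im + 1 := by rw [e2im, e1re]
        simp only [mval, him, if_pos (by linarith : (0:ℝ) ≤ z.im + 1),
          if_pos (by omega : (1:ℤ) ≤ k - 1), if_pos h0t, if_pos (by omega : (1:ℤ) ≤ k)]
        omega
      · simp only [mval, if_pos h0t, if_pos (by omega : (1:ℤ) ≤ k)]
        omega

lemma Vlem {T : ℂ → ℂ} (hT : ∀ z : ℂ, T z = if z.im < 0 then I * z else -I * z + 1 + I) :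
    ∀ N : ℕ, ∀ z : ℂ, ∀ k : ℤ, z.re = (k : ℝ) → mval k z.im ≤ (N : ℤ) →
      ∃ n, (T^[n] z).im = 0 := by
  intro N
  induction N with
  | zero =>
    intro z k hk hm
    rcases step hT z k hk with h | ⟨k', _, _, h1⟩
    · exact h
    · omega
  | succ N ih =>
    intro z k hk hm
    rcases step hT z k hk with h | ⟨k', hk', hle, _⟩
    · exact h
    · obtain ⟨n, hn⟩ := ih (T (T z)) k' hk' (by push_cast at hm ⊢; omega)
      refine ⟨n + 2, ?_⟩
      rw [Function.iterate_add_apply]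
      simpa using hn

lemma hitV {T : ℂ → ℂ} (hT : ∀ z : ℂ, T z = if z.im < 0 then I * z else -I * z + 1 + I)
    (z : ℂ) (k : ℤ) (hk : z.re = (k : ℝ)) : ∃ n, (T^[n] z).im = 0 :=
  Vlem hT (mval k z.im).toNat z k hk (Int.self_le_toNat _)

lemma hitGrid {T : ℂ → ℂ} (hT : ∀ z : ℂ, T z = if z.im < 0 then I * z else -I * z + 1 + I)
    (z : ℂ) (h : (∃ k : ℤ, z.re = (k : ℝ)) ∨ (∃ k : ℤ, z.im = (k : ℝ))) :
    ∃ n, (T^[n] z).im = 0 := by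
  rcases h with ⟨k, hk⟩ | ⟨k, hk⟩
  · exact hitV hT z k hk
  · rcases lt_trichotomy k 0 with hk0 | hk0 | hk0
    · have h1 : z.im < 0 := by rw [hk]; exact_mod_cast hk0
      obtain ⟨n, hn⟩ := hitV hT (T z) (-k)
        (by rw [T_re_neg hT z h1, hk]; push_cast; ring)
      exact ⟨n + 1, by rwa [Function.iterate_add_apply, Function.iterate_one]⟩
    · exact ⟨0, by simp [hk, hk0]⟩
    · have h1 : ¬ z.im < 0 := by
        rw [hk]
        have : (0:ℝ) ≤ (k:ℝ) := by exact_mod_cast hk0.le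
        linarith
      obtain ⟨n, hn⟩ := hitV hT (T z) (k + 1)
        (by rw [T_re_pos hT z h1, hk]; push_cast; ring)
      exact ⟨n + 1, by rwa [Function.iterate_add_apply, Function.iterate_one]⟩

lemma backGrid {T : ℂ → ℂ} (hT : ∀ z : ℂ, T z = if z.im < 0 then I * z else -I * z + 1 + I)
    (z : ℂ)
    (h : (∃ k : ℤ, (T z).re = (k : ℝ)) ∨ (∃ k : ℤ, (T z).im = (k : ℝ))) :
    (∃ k : ℤ, z.re = (k : ℝ)) ∨ (∃ k : ℤ, z.im = (k : ℝ)) := by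
  by_cases h1 : z.im < 0
  · rw [T_re_neg hT z h1, T_im_neg hT z h1] at h
    rcases h with ⟨k, hk⟩ | ⟨k, hk⟩
    · exact Or.inr ⟨-k, by push_cast; linarith⟩
    · exact Or.inl ⟨k, hk⟩
  · rw [T_re_pos hT z h1, T_im_pos hT z h1] at h
    rcases h with ⟨k, hk⟩ | ⟨k, hk⟩
    · exact Or.inr ⟨k - 1, by push_cast; linarith⟩
    · exact Or.inl ⟨1 - k, by push_cast; linarith⟩

lemma iterGrid {T : ℂ → ℂ} (hT : ∀ z : ℂ, T z = if z.im < 0 then I * z else -I * z + 1 + I) :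
    ∀ n : ℕ, ∀ z : ℂ, (T^[n] z).im = 0 →
      (∃ k : ℤ, z.re = (k : ℝ)) ∨ (∃ k : ℤ, z.im = (k : ℝ)) := by
  intro n
  induction n with
  | zero => intro z h; exact Or.inr ⟨0, by simpa using h⟩
  | succ n ih =>
    intro z h
    rw [Function.iterate_succ_apply] at h
    exact backGrid hT z (ih (T z) h)

/-- Section 2.5 (second wandering-domain example): for
`T(z) = iz` if `Im z < 0`, `T(z) = -iz + 1 + i` otherwise, the
pre-discontinuity set `closure (⋃ n, (T^[n]) ⁻¹' ℝ)` is exactly the integer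
grid `{z : Re z ∈ ℤ or Im z ∈ ℤ}`. -/
theorem preDiscontinuity_eq_integer_grid
    (T : ℂ → ℂ)
    (hT : ∀ z : ℂ, T z = if z.im < 0 then I * z else -I * z + 1 + I) :
    closure (⋃ n : ℕ, (T^[n]) ⁻¹' {z : ℂ | z.im = 0}) =
      {z : ℂ | (∃ k : ℤ, z.re = k) ∨ (∃ k : ℤ, z.im = k)} := by
  have hU : (⋃ n : ℕ, (T^[n]) ⁻¹' {z : ℂ | z.im = 0}) =
      {z : ℂ | (∃ k : ℤ, z.re = k) ∨ (∃ k : ℤ, z.im = k)} := by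
    ext z
    simp only [Set.mem_iUnion, Set.mem_preimage, Set.mem_setOf_eq]
    exact ⟨fun ⟨n, hn⟩ => iterGrid hT n z hn, fun h => hitGrid hT z h⟩
  rw [hU]
  refine IsClosed.closure_eq ?_
  have : {z : ℂ | (∃ k : ℤ, z.re = k) ∨ (∃ k : ℤ, z.im = k)} =
      Complex.re ⁻¹' (Set.range ((↑) : ℤ → ℝ)) ∪
      Complex.im ⁻¹' (Set.range ((↑) : ℤ → ℝ)) := by
    ext z
    simp [Set.mem_range, eq_comm]
  rw [this]
  exact ((Int.isClosedEmbedding_coe_real.isClosed_range).preimage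
      Complex.continuous_re).union
    ((Int.isClosedEmbedding_coe_real.isClosed_range).preimage Complex.continuous_im)
end

section
/- Let T : ℂ → ℂ be defined by T(z) = iz if Im z < 0 and T(z) = −iz + 1 + i if Im z ≥ 0, and for n ∈ ℕ let S_n = {z ∈ ℂ : 0 < Re z < 1 and n < Im z < n + 1} be the open unit square above height n. Then each S_n is a wandering domain: for every k ≥ 1, T^[k](S_n) ∩ S_n = ∅. -/
open Complex

/-- Open unit square with lower-left corner `(a, b)`. -/
def Sq (a b : ℤ) : Set ℂ :=
  {z | (a : ℝ) < z.re ∧ z.re < a + 1 ∧ (b : ℝ) < z.im ∧ z.im < b + 1}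

/-- Action of `T` on corners of integer squares. -/
def stp (p : ℤ × ℤ) : ℤ × ℤ := if 0 ≤ p.2 then (p.2 + 1, -p.1) else (-p.2 - 1, p.1)

/-- Invariant region (never contains `(0, n)`). -/
def Pinv (n : ℕ) (p : ℤ × ℤ) : Prop :=
  (0 ≤ p.2 ∧ (n : ℤ) + 1 ≤ p.1 + p.2 ∧ (p.1 = 0 → (n : ℤ) + 1 ≤ p.2)) ∨
  (p.2 < 0 ∧ 1 ≤ p.1 ∧ (n : ℤ) + 2 ≤ p.1 - p.2)

lemma Pinv_step (n : ℕ) (p : ℤ × ℤ) (h : Pinv n p) : Pinv n (stp p) := by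
  obtain ⟨a, b⟩ := p
  simp only [Pinv, stp] at h ⊢
  by_cases hb : 0 ≤ b
  · simp only [if_pos hb] at *
    omega
  · simp only [if_neg hb] at *
    omega

lemma step_maps (T : ℂ → ℂ)
    (hT : ∀ z : ℂ, T z = if z.im < 0 then I * z else -I * z + 1 + I)
    (a b : ℤ) (z : ℂ) (hz : z ∈ Sq a b) :
    T z ∈ Sq (stp (a, b)).1 (stp (a, b)).2 := by
  obtain ⟨h1, h2, h3, h4⟩ := hz
  rw [hT]
  by_cases hb : 0 ≤ b
  · have hb' : (0 : ℝ) ≤ (b : ℝ) := by exact_mod_cast hb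
    rw [if_neg (by linarith)]
    simp only [stp, if_pos hb, Sq, Set.mem_setOf_eq, Complex.add_re, Complex.add_im,
      Complex.mul_re, Complex.mul_im, Complex.neg_re, Complex.neg_im, Complex.I_re,
      Complex.I_im, Complex.one_re, Complex.one_im]
    push_cast
    constructor
    · nlinarith
    constructor
    · nlinarith
    constructor
    · nlinarith
    · nlinarith
  · have hb' : (b : ℝ) ≤ -1 := by
      have : b ≤ -1 := by omega
      exact_mod_cast this
    rw [if_pos (by linarith)]
    simp only [stp, if_neg hb, Sq, Set.mem_setOf_eq, Complex.mul_re, Complex.mul_im,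
      Complex.I_re, Complex.I_im]
    push_cast
    constructor
    · nlinarith
    constructor
    · nlinarith
    constructor
    · nlinarith
    · nlinarith

lemma iter_maps (T : ℂ → ℂ)
    (hT : ∀ z : ℂ, T z = if z.im < 0 then I * z else -I * z + 1 + I)
    (k : ℕ) (p : ℤ × ℤ) (z : ℂ) (hz : z ∈ Sq p.1 p.2) :
    T^[k] z ∈ Sq (stp^[k] p).1 (stp^[k] p).2 := by
  induction k generalizing p z with
  | zero => simpa using hz
  | succ k ih =>
    rw [Function.iterate_succ_apply, Function.iterate_succ_apply]
    exact ih (stp p) (T z) (step_maps T hT p.1 p.2 z hz)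

lemma Pinv_iter (n : ℕ) (k : ℕ) (hk : 1 ≤ k) :
    Pinv n (stp^[k] (0, (n : ℤ))) := by
  induction k with
  | zero => omega
  | succ k ih =>
    rcases Nat.eq_or_lt_of_le hk with h | h
    · have h0 : stp (0, (n : ℤ)) = ((n : ℤ) + 1, 0) := by
        unfold stp
        simp only [if_pos (by positivity : (0 : ℤ) ≤ (n : ℤ))]
        simp
      have : k = 0 := by omega
      subst this
      simp only [zero_add, Function.iterate_one, h0, Pinv]
      omega
    · rw [Function.iterate_succ_apply']
      exact Pinv_step n _ (ih (by omega))

/-- Section 2.5 (second wandering-domain example): for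
`T(z) = iz` if `Im z < 0`, `T(z) = -iz + 1 + i` otherwise, each open unit
square `S n = (0,1) × (n, n+1)` is wandering: `T^[k](S n) ∩ S n = ∅` for all
`k ≥ 1`. -/
theorem squares_are_wandering
    (T : ℂ → ℂ)
    (hT : ∀ z : ℂ, T z = if z.im < 0 then I * z else -I * z + 1 + I)
    (n : ℕ) (k : ℕ) (hk : 1 ≤ k) :
    (T^[k] '' {z : ℂ | 0 < z.re ∧ z.re < 1 ∧ (n : ℝ) < z.im ∧ z.im < (n : ℝ) + 1}) ∩
      {z : ℂ | 0 < z.re ∧ z.re < 1 ∧ (n : ℝ) < z.im ∧ z.im < (n : ℝ) + 1} = ∅ := by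
  ext w
  simp only [Set.mem_inter_iff, Set.mem_image, Set.mem_setOf_eq, Set.mem_empty_iff_false,
    iff_false, not_and, forall_exists_index, and_imp]
  rintro z hz1 hz2 hz3 hz4 rfl hw1 hw2 hw3 hw4
  have hzSq : z ∈ Sq 0 (n : ℤ) := by
    refine ⟨by simpa using hz1, by simpa using hz2, ?_, ?_⟩
    · push_cast; exact hz3
    · push_cast; exact hz4
  set p := stp^[k] (0, (n : ℤ)) with hp
  have hmem := iter_maps T hT k (0, (n : ℤ)) z hzSq
  rw [← hp] at hmem
  obtain ⟨m1, m2, m3, m4⟩ := hmem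
  have hP := Pinv_iter n k hk
  rw [← hp] at hP
  -- from overlap, p = (0, n)
  have ha : p.1 = 0 := by
    have l1 : (p.1 : ℝ) < 1 := lt_trans m1 hw2
    have l2 : (0 : ℝ) < (p.1 : ℝ) + 1 := lt_trans hw1 m2
    have l1' : p.1 < 1 := by exact_mod_cast l1
    have l2' : (0 : ℤ) < p.1 + 1 := by exact_mod_cast l2
    omega
  have hb : p.2 = (n : ℤ) := by
    have l1 : (p.2 : ℝ) < (n : ℝ) + 1 := lt_trans m3 hw4
    have l2 : (n : ℝ) < (p.2 : ℝ) + 1 := lt_trans hw3 m4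
    have l1' : p.2 < (n : ℤ) + 1 := by exact_mod_cast l1
    have l2' : (n : ℤ) < p.2 + 1 := by exact_mod_cast l2
    omega
  rw [Pinv, ha, hb] at hP
  omega
end

section
/- Let k ≥ 3 be a natural number, let r = (k·tan(π/k))/2, let D = {z ∈ ℂ : |z − k| < r}, and let F : ℂ → ℂ be defined by F(z) = 2z if z ∈ D and F(z) = e^{2πi/k}·z if z ∉ D. Then the pre-discontinuity set of F is contained in the union of the k rotated closed discs: closure(⋃_{n≥0} (F^[n])⁻¹(frontier D)) ⊆ ⋃_{j=0}^{k−1} {z ∈ ℂ : e^{2πij/k}·z ∈ closure D}. -/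
open Complex Real
open scoped Classical

/-! Outside `D` the map `F` is the rotation by the primitive `k`-th root of unity
`ζ = e^{2πi/k}`. An orbit that reaches `closure D` after `m` steps has stayed outside `D`
before, so its `m`-th point is `ζ ^ m z = ζ ^ (m % k) z`; hence `z` lies in one of the `k`
rotated closed discs. This applies to every orbit that meets `frontier D ⊆ closure D`, and the
outer closure is harmless because a finite union of closed discs is closed. -/

theorem Function.iterate_eq_of_forall_lt_notMem {α : Type*} {f g : α → α} {s : Set α}
    (hfg : ∀ x ∉ s, f x = g x) {x : α} :
    ∀ {m : ℕ}, (∀ i < m, f^[i] x ∉ s) → f^[m] x = g^[m] x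
  | 0, _ => rfl
  | m + 1, h => by
    rw [Function.iterate_succ_apply', Function.iterate_succ_apply',
      hfg _ (h m m.lt_succ_self), Function.iterate_eq_of_forall_lt_notMem hfg
        fun i hi => h i (hi.trans m.lt_succ_self)]

theorem exists_pow_mul_mem_of_iterate_mem {M : Type*} [Monoid M] {f : M → M} {ζ : M} {k : ℕ}
    (hk : 0 < k) (hζ : ζ ^ k = 1) {s t : Set M} (hst : s ⊆ t) (hf : ∀ x ∉ s, f x = ζ * x)
    {z : M} (hz : ∃ n, f^[n] z ∈ t) : ∃ j < k, ζ ^ j * z ∈ t := by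
  have hfirst : ∀ i < Nat.find hz, f^[i] z ∉ s := fun i hi hs =>
    Nat.find_min hz hi (hst hs)
  have hentry := Nat.find_spec hz
  rw [Function.iterate_eq_of_forall_lt_notMem hf hfirst, mul_left_iterate_apply,
    pow_eq_pow_mod _ hζ] at hentry
  exact ⟨_, Nat.mod_lt _ hk, hentry⟩

theorem preDiscontinuity_subset_rotated_discs_general
    (k : ℕ) (hk : 3 ≤ k)
    (D : Set ℂ)
    (F : ℂ → ℂ)
    (hF : ∀ z : ℂ, F z = if z ∈ D then 2 * z else Complex.exp (2 * π * I / k) * z) :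
    closure (⋃ n : ℕ, (F^[n]) ⁻¹' (frontier D)) ⊆
      ⋃ j : Fin k, {z : ℂ | Complex.exp (2 * π * I * (j : ℕ) / k) * z ∈ closure D} := by
  have hexp (j : ℕ) : Complex.exp (2 * π * I * j / k) = Complex.exp (2 * π * I / k) ^ j := by
    rw [← Complex.exp_nat_mul]
    congr 1
    ring
  have hζ := (Complex.isPrimitiveRoot_exp k (by omega)).pow_eq_one
  refine closure_minimal ?_ <| isClosed_iUnion_of_finite fun j =>
    isClosed_closure.preimage (continuous_const.mul continuous_id)
  rintro z ⟨_, ⟨n, rfl⟩, hn⟩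
  obtain ⟨j, hj, hjz⟩ := exists_pow_mul_mem_of_iterate_mem (by omega) hζ subset_closure
    (fun x hx => (hF x).trans (if_neg hx)) ⟨n, frontier_subset_closure hn⟩
  exact Set.mem_iUnion.mpr ⟨⟨j, hj⟩, by simpa only [Set.mem_ofPred_eq, hexp] using hjz⟩

/-- Section 2.3 (first connectivity example): for `k ≥ 3`,
`r = (k·tan(π/k))/2`, `D` the disc of center `k` and radius `r`, and `F` equal
to `z ↦ 2z` on `D` and to the rotation `z ↦ e^{2πi/k} z` outside `D`, the
pre-discontinuity set of `F` is contained in the union of the `k` rotated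
closed discs. -/
theorem preDiscontinuity_subset_rotated_discs
    (k : ℕ) (hk : 3 ≤ k)
    (r : ℝ) (hr : r = (k * Real.tan (π / k)) / 2)
    (D : Set ℂ) (hD : D = {z : ℂ | ‖z - (k : ℂ)‖ < r})
    (F : ℂ → ℂ)
    (hF : ∀ z : ℂ, F z = if z ∈ D then 2 * z else Complex.exp (2 * π * I / k) * z) :
    closure (⋃ n : ℕ, (F^[n]) ⁻¹' (frontier D)) ⊆
      ⋃ j : Fin k, {z : ℂ | Complex.exp (2 * π * I * (j : ℕ) / k) * z ∈ closure D} :=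
  preDiscontinuity_subset_rotated_discs_general k hk D F hF
end

section
/- Let D = {z ∈ ℂ : |z − 1| < 1/3}, let g : ℂ → ℂ be an arbitrary map (in the paper, any Möbius transformation), and let F : ℂ → ℂ be defined by F(z) = g(z) if z ∈ D and F(z) = 2z if z ∉ D. Then the pre-discontinuity set of F is contained in the union of a shrinking sequence of closed discs together with the origin: closure(⋃_{n≥0} (F^[n])⁻¹(frontier D)) ⊆ {0} ∪ ⋃_{j∈ℕ} {z ∈ ℂ : |z − 2^{−j}| ≤ (1/3)·2^{−j}}. -/
/-!
Outside `D` the map `F` is `z ↦ 2z`, so an orbit of `F` that reaches `frontier D ⊆ closedBall 1 (1/3)`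
must first reach that ball under doubling alone; hence the starting point lies in one of the discs
`2^{-j} · closedBall 1 (1/3)`. These discs are closed and shrink to `0`, so adding `0` to their union
gives a closed set containing every preimage, hence also their closure.
-/

open Metric Filter Topology

theorem exists_iterate_mem_of_iterate_mem {α : Type*} {F f : α → α} {B : Set α}
    (hF : ∀ z ∉ B, F z = f z) {n : ℕ} {z : α} (hz : F^[n] z ∈ B) : ∃ j, f^[j] z ∈ B := by
  induction n generalizing z with
  | zero => exact ⟨0, hz⟩
  | succ n ih =>
    by_cases hzB : z ∈ B
    · exact ⟨0, hzB⟩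
    · rw [Function.iterate_succ_apply, hF z hzB] at hz
      obtain ⟨j, hj⟩ := ih hz
      exact ⟨j + 1, hj⟩

theorem isClosed_insert_iUnion_of_subset_closedBall {X : Type*} [MetricSpace X] {s : ℕ → Set X}
    {a : X} {ε : ℕ → ℝ} (hs : ∀ j, IsClosed (s j)) (hsub : ∀ j, s j ⊆ closedBall a (ε j))
    (hε : Antitone ε) (hε0 : Tendsto ε atTop (𝓝 0)) : IsClosed (insert a (⋃ j, s j)) := by
  refine isClosed_of_closure_subset fun x hx => ?_
  have htrap : ∀ N, x ∈ (⋃ j ∈ Finset.range N, s j) ∪ closedBall a (ε N) := by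
    intro N
    refine closure_minimal ?_ ((isClosed_biUnion_finset fun j _ => hs j).union isClosed_closedBall) hx
    rintro y (rfl | ⟨_, ⟨j, rfl⟩, hy⟩)
    · exact Or.inr (mem_closedBall_self (hε.le_of_tendsto hε0 N))
    · rcases lt_or_ge j N with hjN | hNj
      · exact Or.inl (Set.mem_biUnion (Finset.mem_range.2 hjN) hy)
      · exact Or.inr (closedBall_subset_closedBall (hε hNj) (hsub j hy))
  by_cases hxs : x ∈ ⋃ j, s j
  · exact Or.inr hxs
  have hdist : ∀ N, dist x a ≤ ε N := fun N =>
    (htrap N).resolve_left fun h => hxs (Set.iUnion₂_subset_iUnion _ _ h)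
  exact Or.inl (dist_le_zero.1 (ge_of_tendsto' hε0 hdist))

theorem norm_mul_sub_one {𝕜 : Type*} [NormedDivisionRing 𝕜] {c : 𝕜} (hc : c ≠ 0) (z : 𝕜) :
    ‖c * z - 1‖ = ‖c‖ * ‖z - c⁻¹‖ := by
  rw [← norm_mul, mul_sub, mul_inv_cancel₀ hc]

theorem mem_closedBall_of_two_pow_mul_mem {z : ℂ} {r : ℝ} {j : ℕ}
    (h : 2 ^ j * z ∈ closedBall (1 : ℂ) r) : z ∈ closedBall ((1 / 2 : ℂ) ^ j) (r * (1 / 2) ^ j) := by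
  rw [mem_closedBall, dist_eq_norm, norm_mul_sub_one (pow_ne_zero j two_ne_zero)] at h
  rw [mem_closedBall, dist_eq_norm, one_div, inv_pow, one_div, inv_pow, ← div_eq_mul_inv,
    le_div_iff₀ (by positivity)]
  simpa [mul_comm] using h

open scoped Classical in
/-- Section 2.3 (infinite-connectivity example): for `D` the disc of center `1`
and radius `1/3`, `g` an arbitrary map, and `F` equal to `g` on `D` and to
`z ↦ 2z` outside `D`, the pre-discontinuity set of `F` is contained in `{0}`
together with the closed discs of center `2^{-j}` and radius `(1/3)·2^{-j}`. -/
theorem preDiscontinuity_subset_shrinking_discs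
    (D : Set ℂ) (hD : D = {z : ℂ | ‖z - 1‖ < 1 / 3})
    (g : ℂ → ℂ) (F : ℂ → ℂ)
    (hF : ∀ z : ℂ, F z = if z ∈ D then g z else 2 * z) :
    closure (⋃ n : ℕ, (F^[n]) ⁻¹' (frontier D)) ⊆
      {0} ∪ ⋃ j : ℕ,
        {z : ℂ | ‖z - (1 / 2 : ℂ) ^ j‖ ≤ (1 / 3) * (1 / 2 : ℝ) ^ j} := by
  have hball : D = ball 1 (1 / 3) := by
    rw [hD]; ext; simp [dist_eq_norm]
  have hdisc (j : ℕ) : {z : ℂ | ‖z - (1 / 2 : ℂ) ^ j‖ ≤ (1 / 3) * (1 / 2 : ℝ) ^ j} =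
      closedBall ((1 / 2 : ℂ) ^ j) ((1 / 3) * (1 / 2) ^ j) := by
    ext; simp [dist_eq_norm]
  have hfrontier : frontier D ⊆ closedBall 1 (1 / 3) :=
    hball ▸ frontier_subset_closure.trans closure_ball_subset_closedBall
  have hdouble : ∀ z ∉ closedBall 1 (1 / 3), F z = 2 * z := fun z hz => by
    rw [hF, if_neg (hball ▸ fun h => hz (ball_subset_closedBall h))]
  simp_rw [hdisc, Set.singleton_union]
  refine closure_minimal ?_ (isClosed_insert_iUnion_of_subset_closedBall
    (ε := fun j => (4 / 3) * (1 / 2) ^ j) (fun _ => isClosed_closedBall) (fun j => ?_) ?_ ?_)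
  · rintro z ⟨_, ⟨n, rfl⟩, hz⟩
    obtain ⟨j, hj⟩ := exists_iterate_mem_of_iterate_mem hdouble (hfrontier hz)
    rw [mul_left_iterate_apply] at hj
    exact Or.inr (Set.mem_iUnion.2 ⟨j, mem_closedBall_of_two_pow_mul_mem hj⟩)
  · refine closedBall_subset_closedBall' ?_
    rw [dist_zero_right, norm_pow, norm_div, norm_one, RCLike.norm_ofNat]
    linarith
  · exact fun i j hij => mul_le_mul_of_nonneg_left
      (pow_le_pow_of_le_one (by norm_num) (by norm_num) hij) (by norm_num)
  · simpa using (tendsto_pow_atTop_nhds_zero_of_lt_one (by norm_num : (0 : ℝ) ≤ 1 / 2)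
      (by norm_num)).const_mul (4 / 3)
end
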